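/- arXiv:1812.10859 — 4 statements merged into one kernel-verified Lean document; each statement's English description precedes it below -/
import Mathlib

section
/- Let Y ∈ ℝ^{d×N}, D ∈ ℝ^{d×K}, X ∈ ℝ^{K×N}. With class selector matrices W_1,…,W_C on the K dictionary indices and column selector matrices P_1,…,P_C on the N sample indices, define the FDDL discriminative fidelity f_{Y,X}(D) = ‖Y − DX‖_F² + Σ_{c=1}^C ( ‖(Y − D W_c X)P_c‖_F² + Σ_{j≠c} ‖D W_j X P_c‖_F² ). Then f_{Y,X}(D) = −2·trace(E Dᵀ) + trace(F Dᵀ D) + 2‖Y‖_F², where E = Y Xᵀ + Σ_{c=1}^C Y P_c Xᵀ W_c and F = X Xᵀ + Σ_{j=1}^C W_j X Xᵀ W_j. In particular, minimizing f_{Y,X}(D) over D is equivalent to minimizing −2·trace(E Dᵀ) + trace(F Dᵀ D). -/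
/-!
Expand every squared norm as `‖A - B‖² = ‖A‖² - 2 tr (A Bᵀ) + ‖B‖²`. The `P c` are orthogonal
projections summing to the identity, so `∑ c, ‖Z P c‖² = ‖Z‖²` for every `Z`: this collapses
`∑ c, ‖Y P c‖²` to `‖Y‖²` and, once the omitted term `j = c` is supplied by the cross-class sum,
`∑ c, ∑ j, ‖D W j X P c‖²` to `∑ j, ‖D W j X‖² = ∑ j, tr (W j X Xᵀ W j Dᵀ D)`.
-/
open Matrix Finset

/-- Squared Frobenius norm: `‖A‖_F² = trace (A * Aᵀ)`. -/
noncomputable def frobSq {m n : Type*} [Fintype m] [Fintype n] (A : Matrix m n ℝ) : ℝ :=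
  Matrix.trace (A * Aᵀ)

/-- Diagonal 0/1 selector matrix for class `j` determined by a labeling `cl`. -/
noncomputable def sel {K C : ℕ} (cl : Fin K → Fin C) (j : Fin C) :
    Matrix (Fin K) (Fin K) ℝ :=
  Matrix.diagonal fun i => if cl i = j then (1 : ℝ) else 0

section Selectors

variable {K C : ℕ} (cl : Fin K → Fin C)

lemma sel_transpose (j : Fin C) : (sel cl j)ᵀ = sel cl j :=
  diagonal_transpose _

lemma sel_mul_transpose_self (j : Fin C) : sel cl j * (sel cl j)ᵀ = sel cl j := by
  rw [sel_transpose, sel, diagonal_mul_diagonal]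
  congr 1
  funext i
  split_ifs <;> simp

lemma sum_sel : ∑ j, sel cl j = 1 := by
  ext i i'
  simp [sel, Matrix.sum_apply, diagonal_apply, one_apply]

end Selectors

section Frobenius

variable {m n k ι : Type*} [Fintype m] [Fintype n] [Fintype k] [Fintype ι]

lemma frobSq_sub (A B : Matrix m n ℝ) :
    frobSq (A - B) = frobSq A - 2 * trace (A * Bᵀ) + frobSq B := by
  have hcross : trace (B * Aᵀ) = trace (A * Bᵀ) := by
    rw [← trace_transpose, transpose_mul, transpose_transpose]
  simp only [frobSq, transpose_sub, Matrix.sub_mul, Matrix.mul_sub, trace_sub, hcross]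
  ring

lemma frobSq_mul (D : Matrix m k ℝ) (M : Matrix k n ℝ) :
    frobSq (D * M) = trace (M * Mᵀ * Dᵀ * D) := by
  simp only [frobSq, transpose_mul, Matrix.mul_assoc]
  rw [trace_mul_comm]
  simp only [Matrix.mul_assoc]

lemma sum_frobSq_mul_of_sum_eq_one [DecidableEq n] (P : ι → Matrix n n ℝ)
    (hP : ∀ c, P c * (P c)ᵀ = P c) (hPsum : ∑ c, P c = 1) (A : Matrix m n ℝ) :
    ∑ c, frobSq (A * P c) = frobSq A := by
  have hterm : ∀ c, frobSq (A * P c) = trace (A * P c * Aᵀ) := fun c => by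
    rw [frobSq, transpose_mul, ← Matrix.mul_assoc, Matrix.mul_assoc A, hP]
  simp only [hterm]
  rw [← trace_sum, ← Matrix.sum_mul, ← Matrix.mul_sum, hPsum, Matrix.mul_one, frobSq]

end Frobenius

section Fidelity

variable {m n k ι : Type*} [Fintype m] [Fintype n] [Fintype k] [Fintype ι] [DecidableEq ι]
  (Y : Matrix m n ℝ) (X : Matrix k n ℝ) (D : Matrix m k ℝ)
  (W : ι → Matrix k k ℝ) (P : ι → Matrix n n ℝ)

lemma fidelity_class_term (hW : ∀ j, (W j)ᵀ = W j) (hP : ∀ c, P c * (P c)ᵀ = P c) (c : ι) :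
    frobSq ((Y - D * W c * X) * P c) + ∑ j ∈ univ.erase c, frobSq (D * W j * X * P c) =
      frobSq (Y * P c) - 2 * trace (Y * P c * Xᵀ * W c * Dᵀ) +
        ∑ j, frobSq (D * W j * X * P c) := by
  have hcross : trace (Y * P c * (D * W c * X * P c)ᵀ) = trace (Y * P c * Xᵀ * W c * Dᵀ) := by
    simp only [transpose_mul, hW, Matrix.mul_assoc]
    rw [← Matrix.mul_assoc (P c), hP]
  rw [Matrix.sub_mul, frobSq_sub, hcross, ← add_sum_erase _ _ (mem_univ c)]
  ring

theorem fidelity_eq [DecidableEq n] (hW : ∀ j, (W j)ᵀ = W j) (hP : ∀ c, P c * (P c)ᵀ = P c)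
    (hPsum : ∑ c, P c = 1) :
    frobSq (Y - D * X) + ∑ c, (frobSq ((Y - D * W c * X) * P c) +
        ∑ j ∈ univ.erase c, frobSq (D * W j * X * P c)) =
      -2 * trace ((Y * Xᵀ + ∑ c, Y * P c * Xᵀ * W c) * Dᵀ) +
        trace ((X * Xᵀ + ∑ j, W j * X * Xᵀ * W j) * Dᵀ * D) + 2 * frobSq Y := by
  have hclass : ∀ j, ∑ c, frobSq (D * W j * X * P c) = trace (W j * X * Xᵀ * W j * Dᵀ * D) :=
    fun j => by
      rw [sum_frobSq_mul_of_sum_eq_one P hP hPsum, Matrix.mul_assoc, frobSq_mul]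
      simp only [transpose_mul, hW, Matrix.mul_assoc]
  have hfit : trace (Y * (D * X)ᵀ) = trace (Y * Xᵀ * Dᵀ) := by
    rw [transpose_mul, Matrix.mul_assoc]
  rw [sum_congr rfl fun c _ => fidelity_class_term Y X D W P hW hP c, sum_add_distrib,
    sum_sub_distrib, sum_frobSq_mul_of_sum_eq_one P hP hPsum, ← mul_sum, sum_comm,
    frobSq_sub, hfit, frobSq_mul]
  simp only [hclass, Matrix.add_mul, Matrix.sum_mul, trace_add, trace_sum]
  ring

end Fidelity

/-- The FDDL discriminative fidelity satisfies
`f_{Y,X}(D) = −2·trace(E Dᵀ) + trace(F Dᵀ D) + 2‖Y‖_F²`, and hence minimizing it over `D`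
is equivalent to minimizing `−2·trace(E Dᵀ) + trace(F Dᵀ D)`. -/
theorem stmt0 {d N K C : ℕ}
    (Y : Matrix (Fin d) (Fin N) ℝ) (X : Matrix (Fin K) (Fin N) ℝ)
    (cl : Fin K → Fin C) (lab : Fin N → Fin C)
    (W : Fin C → Matrix (Fin K) (Fin K) ℝ) (hW : W = sel cl)
    (P : Fin C → Matrix (Fin N) (Fin N) ℝ) (hP : P = sel lab)
    (f : Matrix (Fin d) (Fin K) ℝ → ℝ)
    (hf : ∀ D : Matrix (Fin d) (Fin K) ℝ,
      f D = frobSq (Y - D * X) +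
        ∑ c : Fin C, (frobSq ((Y - D * W c * X) * P c) +
          ∑ j ∈ Finset.univ.erase c, frobSq (D * W j * X * P c)))
    (E : Matrix (Fin d) (Fin K) ℝ)
    (hE : E = Y * Xᵀ + ∑ c : Fin C, Y * P c * Xᵀ * W c)
    (F : Matrix (Fin K) (Fin K) ℝ)
    (hF : F = X * Xᵀ + ∑ j : Fin C, W j * X * Xᵀ * W j) :
    (∀ D : Matrix (Fin d) (Fin K) ℝ,
      f D = -2 * Matrix.trace (E * Dᵀ) + Matrix.trace (F * Dᵀ * D) + 2 * frobSq Y)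
    ∧ (∀ Dstar : Matrix (Fin d) (Fin K) ℝ,
        (∀ D : Matrix (Fin d) (Fin K) ℝ, f Dstar ≤ f D) ↔
        (∀ D : Matrix (Fin d) (Fin K) ℝ, -2 * Matrix.trace (E * Dstarᵀ) + Matrix.trace (F * Dstarᵀ * Dstar) ≤
              -2 * Matrix.trace (E * Dᵀ) + Matrix.trace (F * Dᵀ * D))) := by
  have key : ∀ D, f D = -2 * trace (E * Dᵀ) + trace (F * Dᵀ * D) + 2 * frobSq Y := fun D => by
    subst hW hP hE hF
    exact (hf D).trans <| fidelity_eq Y X D _ _ (sel_transpose cl)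
      (sel_mul_transpose_self lab) (sum_sel lab)
  exact ⟨key, fun Dstar => by simp only [key, add_le_add_iff_right]⟩
end

section
/- Consider variables X_1 ∈ ℝ^{K×n_1}, …, X_C ∈ ℝ^{K×n_C} with N = Σ_l n_l, column means m_c = (1/n_c)·X_c·1_{n_c}, overall mean m = (1/N)·Σ_l X_l·1_{n_l}, and constant-column matrices M_c^{(q)}, M^{(q)} ∈ ℝ^{K×q} whose columns all equal m_c and m respectively. Then the function ψ(X_1,…,X_C) = (1/2)·Σ_{c=1}^C ‖M_c^{(n_c)} − M^{(n_c)}‖_F² is differentiable and its partial gradient with respect to X_l equals M_l^{(n_l)} − M^{(n_l)} for every l; equivalently, writing blocks side by side, ∇ψ = [M_1^{(n_1)}, …, M_C^{(n_C)}] − M^{(N)} = M̂ − M. -/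
open Matrix Finset

attribute [local instance] Matrix.normedAddCommGroup Matrix.normedSpace

/-- The continuous linear functional `H ↦ ⟨G, H⟩_F = trace (G * Hᵀ)`. -/
noncomputable def frobCLM {m n : Type*} [Fintype m] [Fintype n]
    (G : Matrix m n ℝ) : Matrix m n ℝ →L[ℝ] ℝ :=
  LinearMap.toContinuousLinearMap
  { toFun := fun H => Matrix.trace (G * Hᵀ)
    map_add' := fun H₁ H₂ => by simp [Matrix.transpose_add, Matrix.mul_add]
    map_smul' := fun r H => by simp [Matrix.transpose_smul, Matrix.mul_smul] }

/-- The column mean `(1/q)·Z·1_q` of a `K × q` matrix. -/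
noncomputable def colMean {K q : ℕ} (Z : Matrix (Fin K) (Fin q) ℝ) : Fin K → ℝ :=
  fun i => (1 / (q : ℝ)) * ∑ j, Z i j

/-- The `K × q` matrix all of whose columns equal `v`. -/
def constCols {K : ℕ} (v : Fin K → ℝ) (q : ℕ) : Matrix (Fin K) (Fin q) ℝ :=
  Matrix.of fun i _ => v i

/-!
Write `ψ = ½ Σ_c n_c ‖m_c − m‖²`, a weighted sum of squares of the linear maps `X ↦ m_c − m`.
Its derivative in the direction `Y` is `Σ_c n_c ⟨m_c − m, m_c(Y) − m(Y)⟩`. The `m(Y)` terms cancel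
because the weighted deviations `Σ_c n_c (m_c − m)` from the pooled mean vanish, and
`n_c m_c(Y) = Y_c 1`, so the full gradient is the block matrix `M̂ − M`. The partial gradient in
`X_l` is its `l`-th block.
-/

section General

variable {ι : Type*} [Fintype ι]

theorem hasFDerivAt_half_weighted_sum_sq {E κ : Type*} [NormedAddCommGroup E] [NormedSpace ℝ E]
    [Fintype κ] (w : ι → ℝ) (f : ι → E →L[ℝ] κ → ℝ) (x : E) :
    HasFDerivAt (fun y => (1 / 2) * ∑ c, w c * ∑ k, f c y k * f c y k)
      (∑ c, w c • ∑ k, f c x k • (ContinuousLinearMap.proj k).comp (f c)) x := by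
  have hcoord (c : ι) (k : κ) :
      HasFDerivAt (fun y => f c y k) ((ContinuousLinearMap.proj k).comp (f c)) x :=
    ((ContinuousLinearMap.proj k).comp (f c)).hasFDerivAt
  have h : HasFDerivAt (fun y => (1 / 2) * ∑ c, w c * ∑ k, f c y k * f c y k)
      ((1 / 2 : ℝ) • ∑ c, w c • ∑ k, (f c x k • (ContinuousLinearMap.proj k).comp (f c) +
        f c x k • (ContinuousLinearMap.proj k).comp (f c))) x :=
    .const_mul (.fun_sum fun c _ => .const_mul (.fun_sum fun k _ =>
      (hcoord c k).mul (hcoord c k)) _) _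
  refine h.congr_fderiv ?_
  ext y
  simp only [_root_.smul_apply, FunLike.coe_sum, Finset.sum_apply, _root_.add_apply, smul_eq_mul,
    Finset.mul_sum]
  exact Finset.sum_congr rfl fun _ _ => Finset.sum_congr rfl fun _ _ => by ring

theorem ContinuousLinearMap.sum_comp_proj_comp_pi_single [DecidableEq ι] {E : ι → Type*}
    [∀ c, NormedAddCommGroup (E c)] [∀ c, NormedSpace ℝ (E c)] {F : Type*}
    [NormedAddCommGroup F] [NormedSpace ℝ F] (g : ∀ c, E c →L[ℝ] F) (l : ι) :
    (∑ c, (g c).comp (ContinuousLinearMap.proj c)).comp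
      (.pi (Pi.single l (.id ℝ (E l)))) = g l := by
  ext H
  simp only [FunLike.coe_sum, Finset.sum_apply, ContinuousLinearMap.comp_apply,
    ContinuousLinearMap.proj_apply, ContinuousLinearMap.pi_apply]
  rw [Finset.sum_eq_single l (fun c _ hc => by simp [Pi.single_eq_of_ne hc]) (by simp)]
  simp

theorem sum_natCast_mul_sub_weightedMean (w : ι → ℕ) (x : ι → ℝ) :
    ∑ c, (w c : ℝ) * (x c - 1 / ((∑ c, w c : ℕ) : ℝ) * ∑ c, w c * x c) = 0 := by
  by_cases hw : ∑ c, w c = 0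
  · rw [Finset.sum_eq_zero_iff] at hw
    simp [hw]
  · have hw' : ((∑ c, w c : ℕ) : ℝ) ≠ 0 := by exact_mod_cast hw
    simp only [mul_sub, Finset.sum_sub_distrib, ← Finset.sum_mul]
    push_cast at hw' ⊢
    field_simp
    ring

end General

section BetweenScatter

variable {K : ℕ}

lemma constCols_sub (u v : Fin K → ℝ) (q : ℕ) :
    constCols u q - constCols v q = constCols (u - v) q := by
  ext i j
  simp [constCols]

lemma frobSq_constCols (v : Fin K → ℝ) (q : ℕ) :
    frobSq (constCols v q) = q * ∑ i, v i * v i := by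
  simp [frobSq, Matrix.trace, Matrix.mul_apply, constCols, Finset.mul_sum]

lemma frobCLM_constCols_apply {q : ℕ} (v : Fin K → ℝ) (H : Matrix (Fin K) (Fin q) ℝ) :
    frobCLM (constCols v q) H = ∑ i, v i * ∑ j, H i j := by
  simp [frobCLM, Matrix.trace, Matrix.mul_apply, constCols, Finset.mul_sum]

lemma natCast_mul_colMean {q : ℕ} (Z : Matrix (Fin K) (Fin q) ℝ) (i : Fin K) :
    q * colMean Z i = ∑ j, Z i j := by
  rcases Nat.eq_zero_or_pos q with rfl | hq
  · simp
  · simp [colMean, hq.ne']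

noncomputable def colMeanCLM {q : ℕ} : Matrix (Fin K) (Fin q) ℝ →L[ℝ] Fin K → ℝ :=
  LinearMap.toContinuousLinearMap
  { toFun := colMean
    map_add' := fun Z W => by ext i; simp [colMean, Finset.sum_add_distrib, mul_add]
    map_smul' := fun r Z => by
      ext i
      simp only [colMean, Matrix.smul_apply, smul_eq_mul, Pi.smul_apply, RingHom.id_apply,
        Finset.mul_sum]
      exact Finset.sum_congr rfl fun _ _ => by ring }

lemma colMeanCLM_apply {q : ℕ} (Z : Matrix (Fin K) (Fin q) ℝ) : colMeanCLM Z = colMean Z := rfl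

variable {ι : Type*} [Fintype ι]

noncomputable def pooledMean (n : ι → ℕ) : (∀ c, Matrix (Fin K) (Fin (n c)) ℝ) →L[ℝ] Fin K → ℝ :=
  ∑ c, ((n c : ℝ) / (∑ c, n c : ℕ)) • colMeanCLM.comp (ContinuousLinearMap.proj c)

lemma pooledMean_apply (n : ι → ℕ) (X : ∀ c, Matrix (Fin K) (Fin (n c)) ℝ) (i : Fin K) :
    pooledMean n X i = 1 / ((∑ c, n c : ℕ) : ℝ) * ∑ c, ∑ j, X c i j := by
  simp only [pooledMean, FunLike.coe_sum, Finset.sum_apply, _root_.smul_apply, Pi.smul_apply,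
    ContinuousLinearMap.comp_apply, ContinuousLinearMap.proj_apply, colMeanCLM_apply, smul_eq_mul,
    Finset.mul_sum, ← natCast_mul_colMean]
  exact Finset.sum_congr rfl fun c _ => by ring

lemma sum_natCast_mul_colMean_sub_pooledMean (n : ι → ℕ) (X : ∀ c, Matrix (Fin K) (Fin (n c)) ℝ)
    (i : Fin K) : ∑ c, (n c : ℝ) * (colMean (X c) i - pooledMean n X i) = 0 := by
  simpa only [pooledMean_apply, natCast_mul_colMean] using
    sum_natCast_mul_sub_weightedMean n fun c => colMean (X c) i

noncomputable def betweenScatter (n : ι → ℕ) (X : ∀ c, Matrix (Fin K) (Fin (n c)) ℝ) : ℝ :=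
  (1 / 2) * ∑ c, frobSq (constCols (colMean (X c)) (n c) - constCols (pooledMean n X) (n c))

theorem hasFDerivAt_betweenScatter (n : ι → ℕ) (X : ∀ c, Matrix (Fin K) (Fin (n c)) ℝ) :
    HasFDerivAt (betweenScatter n)
      (∑ c, (frobCLM (constCols (colMean (X c)) (n c) - constCols (pooledMean n X) (n c))).comp
        (ContinuousLinearMap.proj c)) X := by
  set D : ι → (∀ c, Matrix (Fin K) (Fin (n c)) ℝ) →L[ℝ] Fin K → ℝ :=
    fun c => colMeanCLM.comp (ContinuousLinearMap.proj c) - pooledMean n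
  have hscatter : betweenScatter n = fun Y => (1 / 2) * ∑ c, (n c : ℝ) * ∑ i, D c Y i * D c Y i := by
    ext Y
    simp [betweenScatter, D, colMeanCLM_apply, constCols_sub, frobSq_constCols]
  rw [hscatter]
  refine (hasFDerivAt_half_weighted_sum_sq (fun c => (n c : ℝ)) D X).congr_fderiv ?_
  ext Y
  simp only [FunLike.coe_sum, Finset.sum_apply, _root_.smul_apply, smul_eq_mul]
  -- `HasFDerivAt` uses the topology of `Matrix.normedAddCommGroup`, which is not reducibly the
  -- `Matrix` topology the evaluation lemmas are stated for; `change` re-elaborates the instances.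
  change ∑ c, (n c : ℝ) * ∑ i, (colMean (X c) i - pooledMean n X i) *
      (colMean (Y c) i - pooledMean n Y i) =
    (∑ c, (frobCLM (constCols (colMean (X c)) (n c) - constCols (pooledMean n X) (n c))).comp
        (ContinuousLinearMap.proj c)) Y
  simp only [FunLike.coe_sum, Finset.sum_apply, ContinuousLinearMap.comp_apply,
    ContinuousLinearMap.proj_apply, constCols_sub, frobCLM_constCols_apply]
  have hpooled : ∑ c, (n c : ℝ) * ∑ i, (colMean (X c) i - pooledMean n X i) * pooledMean n Y i
      = 0 := by
    simp only [Finset.mul_sum, ← mul_assoc]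
    rw [Finset.sum_comm]
    simp only [← Finset.sum_mul, sum_natCast_mul_colMean_sub_pooledMean, zero_mul,
      Finset.sum_const_zero]
  calc _ = ∑ c, (n c : ℝ) * ∑ i, (colMean (X c) i - pooledMean n X i) * colMean (Y c) i - 0 := by
        simp only [← hpooled, ← Finset.sum_sub_distrib, ← mul_sub]
    _ = _ := by
        simp only [sub_zero, Finset.mul_sum, Pi.sub_apply, ← natCast_mul_colMean]
        exact Finset.sum_congr rfl fun _ _ => Finset.sum_congr rfl fun _ _ => by ring

end BetweenScatter

theorem stmt7_general {K C : ℕ} (n : Fin C → ℕ)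
    (N : ℕ) (hN : N = ∑ l, n l)
    (m : (∀ l, Matrix (Fin K) (Fin (n l)) ℝ) → Fin K → ℝ)
    (hm : ∀ X i, m X i = (1 / (N : ℝ)) * ∑ l, ∑ j, X l i j)
    (ψ : (∀ l, Matrix (Fin K) (Fin (n l)) ℝ) → ℝ)
    (hψ : ∀ X, ψ X = (1/2) * ∑ c : Fin C,
      frobSq (constCols (colMean (X c)) (n c) - constCols (m X) (n c)))
    (X : ∀ l, Matrix (Fin K) (Fin (n l)) ℝ) :
    ∀ l, HasFDerivAt (fun Z : Matrix (Fin K) (Fin (n l)) ℝ => ψ (Function.update X l Z))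
      (frobCLM (constCols (colMean (X l)) (n l) - constCols (m X) (n l)))
      (X l) := by
  subst hN
  obtain rfl : m = pooledMean n := funext fun Y => funext fun i => by rw [hm, pooledMean_apply]
  obtain rfl : ψ = betweenScatter n := funext hψ
  intro l
  have hX : HasFDerivAt (betweenScatter n)
      (∑ c, (frobCLM (constCols (colMean (X c)) (n c) - constCols (pooledMean n X) (n c))).comp
        (ContinuousLinearMap.proj c)) (Function.update X l (X l)) := by
    rw [Function.update_eq_self]
    exact hasFDerivAt_betweenScatter n X
  exact (hX.comp (X l) (hasFDerivAt_update X (X l))).congr_fderiv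
    (ContinuousLinearMap.sum_comp_proj_comp_pi_single _ l)

/-- For `ψ(X_1,…,X_C) = ½·Σ_c ‖M_c^{(n_c)} − M^{(n_c)}‖_F²`, the partial gradient with
respect to `X_l` equals `M_l^{(n_l)} − M^{(n_l)}` for every `l`. -/
theorem stmt7 {K C : ℕ} (n : Fin C → ℕ) (hn : ∀ l, 1 ≤ n l)
    (N : ℕ) (hN : N = ∑ l, n l)
    (m : (∀ l, Matrix (Fin K) (Fin (n l)) ℝ) → Fin K → ℝ)
    (hm : ∀ X i, m X i = (1 / (N : ℝ)) * ∑ l, ∑ j, X l i j)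
    (ψ : (∀ l, Matrix (Fin K) (Fin (n l)) ℝ) → ℝ)
    (hψ : ∀ X, ψ X = (1/2) * ∑ c : Fin C,
      frobSq (constCols (colMean (X c)) (n c) - constCols (m X) (n c)))
    (X : ∀ l, Matrix (Fin K) (Fin (n l)) ℝ) :
    ∀ l, HasFDerivAt (fun Z : Matrix (Fin K) (Fin (n l)) ℝ => ψ (Function.update X l Z))
      (frobCLM (constCols (colMean (X l)) (n l) - constCols (m X) (n l)))
      (X l) :=
  stmt7_general n N hN m hm ψ hψ X
end

section
/- Let Y ∈ ℝ^{d×N}, D ∈ ℝ^{d×K}, X ∈ ℝ^{K×N} be fixed, with class selectors W_c on dictionary indices and column selectors P_c on sample indices, and let D_0 ∈ ℝ^{d×k_0}, X^0 ∈ ℝ^{k_0×N} be arbitrary. Set Ỹ = Y − DX, Ŷ = Σ_{c=1}^C (Y − D W_c X)P_c, and V = Y − (1/2)·D·M(X) with M(X) = X + Σ_c W_c X P_c. Then (1/2)‖Y − D_0 X^0 − DX‖_F² + Σ_{c=1}^C (1/2)‖(Y − D_0 X^0 − D W_c X)P_c‖_F² = ‖V − D_0 X^0‖_F² + (1/4)‖Ỹ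 − Ŷ‖_F², where the last term is a constant independent of (D_0, X^0). Consequently, as a function of (D_0, X^0) with Y, D, X fixed, the LRSDL fidelity objective equals ‖V − D_0 X^0‖_F² up to an additive constant. -/
open Matrix Finset

/-!
Column `j` of `(A - D W_c X) P_c` vanishes unless `c` is the label of `j`, so the class-wise
terms add up to `½‖A - Z‖²` with `Z = Σ_c D W_c X P_c`, where `A = Y - D₀X⁰`. The identity is
then the parallelogram law `½‖A - U‖² + ½‖A - U'‖² = ‖A - ½(U + U')‖² + ¼‖U' - U‖²` for
`U = DX` and `U' = Z`, since `D·M(X) = DX + Z` and `Ỹ - Ŷ = Z - DX`.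
-/

section FrobSq

variable {m n : Type*} [Fintype m] [Fintype n]

theorem frobSq_eq_sum_sq (A : Matrix m n ℝ) : frobSq A = ∑ i, ∑ j, A i j ^ 2 := by
  simp [frobSq, Matrix.trace, Matrix.mul_apply, sq]

theorem frobSq_parallelogram (A U U' : Matrix m n ℝ) :
    1 / 2 * frobSq (A - U) + 1 / 2 * frobSq (A - U')
      = frobSq (A - (1 / 2 : ℝ) • (U + U')) + 1 / 4 * frobSq (U' - U) := by
  simp only [frobSq_eq_sum_sq, mul_sum, ← sum_add_distrib]
  refine sum_congr rfl fun i _ => sum_congr rfl fun j _ => ?_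
  simp only [Matrix.sub_apply, Matrix.add_apply, Matrix.smul_apply, smul_eq_mul]
  ring

end FrobSq

section Selectors

variable {m : Type*} {N C : ℕ} (lab : Fin N → Fin C)

theorem sum_sel_s10 : ∑ c, sel lab c = 1 := by
  ext i j
  simp [sel, Matrix.sum_apply, diagonal_apply, one_apply]

theorem mul_sel_apply (A : Matrix m (Fin N) ℝ) (c : Fin C) (i : m) (j : Fin N) :
    (A * sel lab c) i j = if lab j = c then A i j else 0 := by
  simp [sel, mul_diagonal]

theorem sum_frobSq_mul_sel [Fintype m] (F : Fin C → Matrix m (Fin N) ℝ) :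
    ∑ c, frobSq (F c * sel lab c) = frobSq (∑ c, F c * sel lab c) := by
  simp only [frobSq_eq_sum_sq, Matrix.sum_apply, mul_sel_apply, ite_pow, sum_ite_eq, mem_univ,
    if_true]
  rw [sum_comm]
  refine sum_congr rfl fun i _ => ?_
  rw [sum_comm]
  simp

theorem sum_sub_mul_sel (A : Matrix m (Fin N) ℝ) (B : Fin C → Matrix m (Fin N) ℝ) :
    ∑ c, (A - B c) * sel lab c = A - ∑ c, B c * sel lab c := by
  simp only [Matrix.sub_mul, sum_sub_distrib, ← Matrix.mul_sum, sum_sel_s10, Matrix.mul_one]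

end Selectors

/-- With `Ỹ = Y − DX`, `Ŷ = Σ_c (Y − D W_c X)P_c`, and `V = Y − ½·D·M(X)` where
`M(X) = X + Σ_c W_c X P_c`, for arbitrary `D₀, X⁰` the LRSDL fidelity satisfies
`½‖Y − D₀X⁰ − DX‖² + Σ_c ½‖(Y − D₀X⁰ − D W_c X)P_c‖² = ‖V − D₀X⁰‖² + ¼‖Ỹ − Ŷ‖²`,
where the last term does not depend on `(D₀, X⁰)`. -/
theorem stmt10 {d N K C k0 : ℕ}
    (Y : Matrix (Fin d) (Fin N) ℝ) (D : Matrix (Fin d) (Fin K) ℝ)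
    (X : Matrix (Fin K) (Fin N) ℝ)
    (cl : Fin K → Fin C) (lab : Fin N → Fin C)
    (W : Fin C → Matrix (Fin K) (Fin K) ℝ) (hW : W = sel cl)
    (P : Fin C → Matrix (Fin N) (Fin N) ℝ) (hP : P = sel lab)
    (Ytil : Matrix (Fin d) (Fin N) ℝ) (hYtil : Ytil = Y - D * X)
    (Yhat : Matrix (Fin d) (Fin N) ℝ)
    (hYhat : Yhat = ∑ c : Fin C, (Y - D * W c * X) * P c)
    (V : Matrix (Fin d) (Fin N) ℝ)
    (hV : V = Y - ((1 : ℝ) / 2) • (D * (X + ∑ c : Fin C, W c * X * P c)))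
    (D0 : Matrix (Fin d) (Fin k0) ℝ) (X0 : Matrix (Fin k0) (Fin N) ℝ) :
    (1/2) * frobSq (Y - D0 * X0 - D * X)
      + ∑ c : Fin C, (1/2) * frobSq ((Y - D0 * X0 - D * W c * X) * P c)
    = frobSq (V - D0 * X0) + (1/4) * frobSq (Ytil - Yhat) := by
  subst hW hP hYtil hYhat hV
  set Z := ∑ c, D * sel cl c * X * sel lab c
  have hclasswise : ∑ c, (1/2) * frobSq ((Y - D0 * X0 - D * sel cl c * X) * sel lab c)
      = 1 / 2 * frobSq (Y - D0 * X0 - Z) := by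
    rw [← mul_sum, sum_frobSq_mul_sel, sum_sub_mul_sel]
  have hV : Y - (1 / 2 : ℝ) • (D * (X + ∑ c, sel cl c * X * sel lab c)) - D0 * X0
      = Y - D0 * X0 - (1 / 2 : ℝ) • (D * X + Z) := by
    simp only [Z, Matrix.mul_add, Matrix.mul_sum, Matrix.mul_assoc]
    abel
  have hresidual : Y - D * X - ∑ c, (Y - D * sel cl c * X) * sel lab c = Z - D * X := by
    rw [sum_sub_mul_sel]
    abel
  rw [hclasswise, hV, hresidual]
  exact frobSq_parallelogram _ _ _
end

section
/- Let {G_1, …, G_m} be a partition of {1, …, n}, let u ∈ ℝ^n, and let η > 0. For x ∈ ℝ^n write x_{G_i} for the restriction of x to the coordinates in G_i. Then the function x ↦ (1/2)‖x − u‖₂² + η·Σ_{i=1}^m ‖x_{G_i}‖₂ attains its minimum over ℝ^n uniquely at the point x* defined blockwise by x*_{G_i} = max{1 − η/‖u_{G_i}‖₂, 0}·u_{G_i} (interpreted as x*_{G_i} = 0 when u_{G_i} = 0) for each i = 1, …, m. -/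
/-!
The objective splits into independent blocks `½‖x_G - u_G‖² + η‖x_G‖`, so it suffices to
treat one block, i.e. one real inner product space. There `p = max (1 - η/‖w‖) 0 • w` satisfies
`⟪v - p, w - p⟫ ≤ η (‖v‖ - ‖p‖)` for every `v`: `(w - p)/η` is a subgradient of the norm at `p`,
which is Cauchy–Schwarz. Expanding `‖v - w‖²` around `p` turns this into the quadratic growth
bound `F p + ½‖v - p‖² ≤ F v` for `F = ½‖· - w‖² + η‖·‖`, giving both minimality and uniqueness.
-/

open Finset RealInnerProductSpace

section SoftThreshold

variable {E : Type*} [NormedAddCommGroup E] [InnerProductSpace ℝ E]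

noncomputable def softThreshold (η : ℝ) (w : E) : E := max (1 - η / ‖w‖) 0 • w

lemma softThreshold_of_norm_le {η : ℝ} {w : E} (h : ‖w‖ ≤ η) : softThreshold η w = 0 := by
  rcases eq_or_ne w 0 with rfl | hw
  · simp [softThreshold]
  · have : 1 ≤ η / ‖w‖ := (one_le_div (norm_pos_iff.2 hw)).2 h
    simp [softThreshold, max_eq_right (sub_nonpos.2 this)]

lemma softThreshold_of_lt_norm {η : ℝ} {w : E} (hη : 0 ≤ η) (h : η < ‖w‖) :
    softThreshold η w = (1 - η / ‖w‖) • w := by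
  have : η / ‖w‖ < 1 := (div_lt_one (hη.trans_lt h)).2 h
  rw [softThreshold, max_eq_left (by linarith)]

lemma inner_sub_softThreshold_le {η : ℝ} (hη : 0 ≤ η) (v w : E) :
    ⟪v - softThreshold η w, w - softThreshold η w⟫ ≤ η * (‖v‖ - ‖softThreshold η w‖) := by
  rcases le_or_gt ‖w‖ η with h | h
  · rw [softThreshold_of_norm_le h, sub_zero, sub_zero, norm_zero, sub_zero]
    calc ⟪v, w⟫ ≤ ‖v‖ * ‖w‖ := real_inner_le_norm v w
      _ ≤ η * ‖v‖ := by rw [mul_comm]; exact mul_le_mul_of_nonneg_right h (norm_nonneg v)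
  · have hw : 0 < ‖w‖ := hη.trans_lt h
    rw [softThreshold_of_lt_norm hη h]
    have hwp : w - (1 - η / ‖w‖) • w = (η / ‖w‖) • w := by rw [sub_smul, one_smul, sub_sub_cancel]
    rw [hwp, inner_smul_right, inner_sub_left, inner_smul_left, real_inner_self_eq_norm_sq,
      norm_smul, Real.norm_of_nonneg (by rw [sub_nonneg, div_le_one hw]; exact h.le)]
    have hcs := real_inner_le_norm v w
    simp only [conj_trivial]
    field_simp
    nlinarith [mul_le_mul_of_nonneg_left hcs hη]

lemma norm_softThreshold_sub_sq_add_le {η : ℝ} (hη : 0 ≤ η) (v w : E) :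
    (1/2) * ‖softThreshold η w - w‖ ^ 2 + η * ‖softThreshold η w‖
      + (1/2) * ‖v - softThreshold η w‖ ^ 2 ≤ (1/2) * ‖v - w‖ ^ 2 + η * ‖v‖ := by
  have hinner := inner_sub_softThreshold_le hη v w
  set p := softThreshold η w
  have hsplit := norm_sub_sq_real (v - p) (w - p)
  rw [sub_sub_sub_cancel_right, norm_sub_rev w p] at hsplit
  linarith

end SoftThreshold

section Blocks

variable {ι : Type*}

def blockVec (s : Finset ι) (x : ι → ℝ) : EuclideanSpace ℝ s := WithLp.toLp 2 fun j => x j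

lemma blockVec_sub (s : Finset ι) (x y : ι → ℝ) :
    blockVec s x - blockVec s y = blockVec s (x - y) := rfl

lemma norm_blockVec_sq (s : Finset ι) (x : ι → ℝ) :
    ‖blockVec s x‖ ^ 2 = ∑ j ∈ s, x j ^ 2 := by
  rw [EuclideanSpace.norm_sq_eq, ← s.sum_coe_sort]
  simp [blockVec]

lemma norm_blockVec (s : Finset ι) (x : ι → ℝ) :
    ‖blockVec s x‖ = √(∑ j ∈ s, x j ^ 2) := by
  rw [← norm_blockVec_sq, Real.sqrt_sq (norm_nonneg _)]

lemma blockVec_eq_softThreshold {s : Finset ι} {u y : ι → ℝ} {η : ℝ}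
    (hy : ∀ j ∈ s, y j = max (1 - η / √(∑ k ∈ s, u k ^ 2)) 0 * u j) :
    blockVec s y = softThreshold η (blockVec s u) := by
  ext j
  rw [softThreshold, norm_blockVec]
  exact hy j j.2

end Blocks

lemma block_sum_sq_sub_add_le {ι : Type*} {s : Finset ι} {u y : ι → ℝ} {η : ℝ} (hη : 0 ≤ η)
    (hy : ∀ j ∈ s, y j = max (1 - η / √(∑ k ∈ s, u k ^ 2)) 0 * u j) (x : ι → ℝ) :
    (1/2) * ∑ j ∈ s, (y j - u j) ^ 2 + η * √(∑ j ∈ s, y j ^ 2)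
      + (1/2) * ∑ j ∈ s, (x j - y j) ^ 2
      ≤ (1/2) * ∑ j ∈ s, (x j - u j) ^ 2 + η * √(∑ j ∈ s, x j ^ 2) := by
  have h := norm_softThreshold_sub_sq_add_le hη (blockVec s x) (blockVec s u)
  rw [← blockVec_eq_softThreshold hy] at h
  simp only [blockVec_sub, norm_blockVec_sq] at h
  simpa only [norm_blockVec, Pi.sub_apply] using h

lemma sum_sum_eq_sum_of_partition {ι κ M : Type*} [Fintype ι] [Fintype κ] [DecidableEq ι]
    [AddCommMonoid M] (G : κ → Finset ι) (hdisj : ∀ i₁ i₂, i₁ ≠ i₂ → Disjoint (G i₁) (G i₂))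
    (π : ι → κ) (hπ : ∀ j, j ∈ G (π j)) (F : ι → M) :
    ∑ i, ∑ j ∈ G i, F j = ∑ j, F j := by
  rw [← sum_biUnion fun i₁ _ i₂ _ h => hdisj i₁ i₂ h]
  congr
  exact eq_univ_of_forall fun j => mem_biUnion.2 ⟨π j, mem_univ _, hπ j⟩

lemma eq_of_block_mem {ι κ : Type*} {G : κ → Finset ι}
    (hdisj : ∀ i₁ i₂, i₁ ≠ i₂ → Disjoint (G i₁) (G i₂))
    {π : ι → κ} (hπ : ∀ j, j ∈ G (π j)) {i : κ} {j : ι} (hj : j ∈ G i) : π j = i := by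
  by_contra h
  exact disjoint_left.1 (hdisj _ _ h) (hπ j) hj

lemma sum_sq_sub_add_sum_blockNorm_le {ι κ : Type*} [Fintype ι] [Fintype κ] [DecidableEq ι]
    {G : κ → Finset ι} (hdisj : ∀ i₁ i₂, i₁ ≠ i₂ → Disjoint (G i₁) (G i₂))
    {π : ι → κ} (hπ : ∀ j, j ∈ G (π j)) {u y : ι → ℝ} {η : ℝ} (hη : 0 ≤ η)
    (hy : ∀ j, y j = max (1 - η / √(∑ k ∈ G (π j), u k ^ 2)) 0 * u j) (x : ι → ℝ) :
    (1/2) * ∑ j, (y j - u j) ^ 2 + η * ∑ i, √(∑ j ∈ G i, y j ^ 2)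
      + (1/2) * ∑ j, (x j - y j) ^ 2
      ≤ (1/2) * ∑ j, (x j - u j) ^ 2 + η * ∑ i, √(∑ j ∈ G i, x j ^ 2) := by
  have hblock := sum_le_sum fun i (_ : i ∈ univ) =>
    block_sum_sq_sub_add_le (s := G i) (u := u) (y := y) hη
      (fun j hj => by rw [hy, eq_of_block_mem hdisj hπ hj]) x
  simp only [sum_add_distrib, ← mul_sum, sum_sum_eq_sum_of_partition G hdisj π hπ] at hblock
  exact hblock

theorem stmt15_general {n m : ℕ} (G : Fin m → Finset (Fin n))
    (hdisj : ∀ i₁ i₂, i₁ ≠ i₂ → Disjoint (G i₁) (G i₂))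
    (π : Fin n → Fin m) (hπ : ∀ j, j ∈ G (π j))
    (u : Fin n → ℝ) (η : ℝ) (hη : 0 < η)
    (blockNorm : (Fin n → ℝ) → Fin m → ℝ)
    (hbn : ∀ x i, blockNorm x i = Real.sqrt (∑ j ∈ G i, x j ^ 2))
    (f : (Fin n → ℝ) → ℝ)
    (hf : ∀ x, f x = (1/2) * (∑ j, (x j - u j) ^ 2) + η * ∑ i, blockNorm x i)
    (xstar : Fin n → ℝ)
    (hx : ∀ j, xstar j = max (1 - η / blockNorm u (π j)) 0 * u j) :
    (∀ x, f xstar ≤ f x) ∧ (∀ x, (∀ y, f x ≤ f y) → x = xstar) := by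
  have key : ∀ x, f xstar + (1/2) * ∑ j, (x j - xstar j) ^ 2 ≤ f x := fun x => by
    simp only [hf, hbn]
    exact sum_sq_sub_add_sum_blockNorm_le hdisj hπ hη.le (fun j => by rw [hx, hbn]) x
  have hsq : ∀ x : Fin n → ℝ, 0 ≤ ∑ j, (x j - xstar j) ^ 2 := fun x =>
    sum_nonneg fun j _ => sq_nonneg _
  refine ⟨fun x => by linarith [key x, hsq x], fun x hmin => ?_⟩
  have hzero : ∑ j, (x j - xstar j) ^ 2 = 0 := by linarith [key x, hsq x, hmin xstar]
  funext j
  have hj := (sum_eq_zero_iff_of_nonneg fun j _ => sq_nonneg (x j - xstar j)).1 hzero j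
    (mem_univ j)
  exact sub_eq_zero.1 (pow_eq_zero_iff two_ne_zero |>.1 hj)

/-- Let `{G_1, …, G_m}` be a partition of `{1, …, n}` (pairwise disjoint nonempty blocks
covering everything, with `π j` the block of coordinate `j`), `u ∈ ℝⁿ`, `η > 0`. Then
`x ↦ ½‖x − u‖₂² + η·Σᵢ ‖x_{G_i}‖₂` attains its minimum over `ℝⁿ` uniquely at the point
`x*` given blockwise by `x*_{G_i} = max{1 − η/‖u_{G_i}‖₂, 0}·u_{G_i}`. -/
theorem stmt15 {n m : ℕ} (G : Fin m → Finset (Fin n))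
    (hdisj : ∀ i₁ i₂, i₁ ≠ i₂ → Disjoint (G i₁) (G i₂))
    (hne : ∀ i, (G i).Nonempty)
    (π : Fin n → Fin m) (hπ : ∀ j, j ∈ G (π j))
    (u : Fin n → ℝ) (η : ℝ) (hη : 0 < η)
    (blockNorm : (Fin n → ℝ) → Fin m → ℝ)
    (hbn : ∀ x i, blockNorm x i = Real.sqrt (∑ j ∈ G i, x j ^ 2))
    (f : (Fin n → ℝ) → ℝ)
    (hf : ∀ x, f x = (1/2) * (∑ j, (x j - u j) ^ 2) + η * ∑ i, blockNorm x i)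
    (xstar : Fin n → ℝ)
    (hx : ∀ j, xstar j = max (1 - η / blockNorm u (π j)) 0 * u j) :
    (∀ x, f xstar ≤ f x) ∧ (∀ x, (∀ y, f x ≤ f y) → x = xstar) :=
  stmt15_general G hdisj π hπ u η hη blockNorm hbn f hf xstar hx
end
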